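/- The q-Eulerian polynomials E_n(x,q) = Σ_{σ ∈ S_n} x^{des(σ)} q^{w(σ)} satisfy E_0(x,q) = 1 and, for n ≥ 1, E_n(x,q) = Σ_{i=1}^{n−1} C(n−1, i) · E_i(x,q) · E_{n−i−1}(qx, q) · x + E_{n−1}(qx, q). -/

import Mathlib

/-- Number of descents of a sequence. -/
def desL : List ℕ → ℕ
  | a :: b :: t => (if b < a then 1 else 0) + desL (b :: t)
  | _ => 0

/-- Repeatedly split a sequence just after its maximum element. -/
def splitLeftAux : ℕ → List ℕ → List (List ℕ)
  | 0, _ => []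
  | _, [] => []
  | fuel + 1, l =>
    let i := l.idxOf (l.foldr Nat.max 0)
    l.take (i + 1) :: splitLeftAux fuel (l.drop (i + 1))

def splitLeft (l : List ℕ) : List (List ℕ) := splitLeftAux l.length l

/-- Split a sequence at its minimum element, splitting the left part
repeatedly just after its maximum. -/
def splitAll (l : List ℕ) : List (List ℕ) :=
  let m := l.foldr Nat.min (l.headD 0)
  let i := l.idxOf m
  splitLeft (l.take i) ++ [[m]] ++ [l.drop (i + 1)]

/-- The weight of a sequence of distinct naturals (fuelled version; the fuel
`(length+2)^2` in `weightL` is more than the recursion depth ever needed). -/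
def weightAux : ℕ → List ℕ → ℕ
  | 0, _ => 0
  | fuel + 1, l =>
    if l.length ≤ 1 ∨ l.Pairwise (· < ·) then 0
    else ((splitAll (l ++ [l.foldr Nat.max 0 + 1])).map
      (fun p => desL p + weightAux fuel p)).sum

/-- The weight of a permutation viewed as a sequence. -/
def weightL (l : List ℕ) : ℕ := weightAux ((l.length + 2) ^ 2) l

/-- `l` is a permutation of `[n] = {1,…,n}` written as a sequence. -/
def IsPermList (n : ℕ) (l : List ℕ) : Prop := l.Perm (List.range' 1 n)

/-- The word (one-line notation, entries in `{1,…,n}`) of a permutation. -/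
def permWord {n : ℕ} (σ : Equiv.Perm (Fin n)) : List ℕ :=
  List.ofFn fun i => (σ i : ℕ) + 1

/-- `E_n[x^d q^m]`: the number of permutations of `[n]` with `d` descents and weight `m`. -/
def Ecoeff (n d m : ℕ) : ℕ :=
  (Finset.univ.filter fun σ : Equiv.Perm (Fin n) =>
    desL (permWord σ) = d ∧ weightL (permWord σ) = m).card

open MvPolynomial in
/-- The q-Eulerian polynomial `E_n(x,q)`, with `X 0 = x` and `X 1 = q`. -/
noncomputable def Epoly (n : ℕ) : MvPolynomial (Fin 2) ℤ :=
  ∑ σ : Equiv.Perm (Fin n), X 0 ^ desL (permWord σ) * X 1 ^ weightL (permWord σ)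

open MvPolynomial in
/-- `E_n(qx,q)`, i.e. `E_n` with `x` replaced by `qx`. -/
noncomputable def EpolyQx (n : ℕ) : MvPolynomial (Fin 2) ℤ :=
  ∑ σ : Equiv.Perm (Fin n),
    (X 1 * X 0) ^ desL (permWord σ) * X 1 ^ weightL (permWord σ)

/-!
Cut a permutation of `[n]` at its entry `1`, `σ = α 1 β`. Because `1` is the minimum,
`splitAll` cuts `σ` (followed by its new maximum) into the blocks of `splitLeft α`, then `[1]`,
then `β` followed by the new maximum. Appending larger entries in increasing order changes
neither descents nor weight, so `w(σ) = sw(α) + des(β) + w(β)`, where `sw(α)` (`splitWeight α`)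
sums `des + w` over the blocks of `α` cut after successive maxima, while
`des(σ) = des(α) + des(β) + [α ≠ ∅]`. These statistics depend only on the relative order of the
entries, so summing over the set of values in `α` gives
`E_n = ∑ᵢ C(n-1,i) Fᵢ x^[i>0] E_{n-1-i}(qx,q)`, with `Fᵢ` (`Fpoly i`) the generating function
of `(des, sw)`. Cutting instead at the entry `n`, `σ = γ n δ`, gives
`sw(σ) = des(γ) + w(γ) + sw(δ)` and the mirror-image recurrence for `F_n`. After `i ↦ n-1-i` the
two recurrences coincide, so `F_n = E_n`, and the first one becomes the claimed recurrence.
-/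

section Sequences

open List

theorem pairwise_of_length_le_one {α : Type*} {R : α → α → Prop} :
    ∀ {l : List α}, l.length ≤ 1 → l.Pairwise R
  | [], _ => .nil
  | [a], _ => pairwise_singleton R a

theorem foldr_eq_init_or_mem {α : Type*} {f : α → α → α} (hf : ∀ a b, f a b = a ∨ f a b = b)
    (i : α) : ∀ l : List α, l.foldr f i = i ∨ l.foldr f i ∈ l
  | [] => Or.inl rfl
  | a :: t => by
    rcases hf a (t.foldr f i) with h | h <;> rw [foldr_cons, h]
    · exact Or.inr mem_cons_self
    · exact (foldr_eq_init_or_mem hf i t).imp_right (mem_cons_of_mem a)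

theorem le_foldr_min_iff {i m : ℕ} {l : List ℕ} :
    m ≤ l.foldr Nat.min i ↔ m ≤ i ∧ ∀ x ∈ l, m ≤ x := by
  induction l with
  | nil => simp
  | cons a t ih =>
    change m ≤ min a _ ↔ _
    rw [le_min_iff, ih, forall_mem_cons]; tauto

theorem foldr_max_le_iff {i m : ℕ} {l : List ℕ} :
    l.foldr Nat.max i ≤ m ↔ i ≤ m ∧ ∀ x ∈ l, x ≤ m := by
  induction l with
  | nil => simp
  | cons a t ih =>
    change max a _ ≤ m ↔ _
    rw [max_le_iff, ih, forall_mem_cons]; tauto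

-- The minimum and maximum exactly as `splitAll` and `splitLeftAux` compute them.
def minL (l : List ℕ) : ℕ := l.foldr Nat.min (l.headD 0)

def maxL (l : List ℕ) : ℕ := l.foldr Nat.max 0

theorem minL_le {l : List ℕ} {x : ℕ} (hx : x ∈ l) : minL l ≤ x :=
  (le_foldr_min_iff.1 le_rfl).2 x hx

theorem le_maxL {l : List ℕ} {x : ℕ} (hx : x ∈ l) : x ≤ maxL l :=
  (foldr_max_le_iff.1 le_rfl).2 x hx

theorem minL_mem {l : List ℕ} (hl : l ≠ []) : minL l ∈ l := by
  obtain ⟨a, t, rfl⟩ := exists_cons_of_ne_nil hl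
  rcases foldr_eq_init_or_mem (fun a b => min_choice a b) a (a :: t) with h | h
  · rw [minL, headD_cons, h]; exact mem_cons_self
  · exact h

theorem maxL_mem {l : List ℕ} (hl : l ≠ []) : maxL l ∈ l := by
  rcases foldr_eq_init_or_mem (fun a b => max_choice a b) 0 l with h | h
  · obtain ⟨a, ha⟩ := exists_mem_of_ne_nil l hl
    have : a = 0 := Nat.le_zero.1 (h ▸ le_maxL ha)
    rw [maxL, h, ← this]; exact ha
  · exact h

theorem minL_eq {l : List ℕ} {m : ℕ} (hm : m ∈ l) (h : ∀ x ∈ l, m ≤ x) : minL l = m :=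
  le_antisymm (minL_le hm) (h _ (minL_mem (ne_nil_of_mem hm)))

theorem maxL_eq {l : List ℕ} {m : ℕ} (hm : m ∈ l) (h : ∀ x ∈ l, x ≤ m) : maxL l = m :=
  le_antisymm (h _ (maxL_mem (ne_nil_of_mem hm))) (le_maxL hm)

theorem desL_eq_zero_of_pairwise : ∀ {l : List ℕ}, l.Pairwise (· < ·) → desL l = 0
  | [], _ | [_], _ => rfl
  | a :: b :: t, h => by
    rw [desL, desL_eq_zero_of_pairwise h.of_cons,
      if_neg (Nat.not_lt.2 (rel_of_pairwise_cons h mem_cons_self).le)]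

theorem desL_append_cons_cons (a b : ℕ) (l₁ l₂ : List ℕ) :
    desL (l₁ ++ a :: b :: l₂) =
      desL (l₁ ++ [a]) + desL (b :: l₂) + if b < a then 1 else 0 := by
  induction l₁ with
  | nil => simp only [nil_append, desL]; omega
  | cons x l ih =>
    cases l with
    | nil => simp only [cons_append, nil_append, desL]; omega
    | cons y l => simp only [cons_append, desL] at ih ⊢; omega

theorem desL_cons_of_forall_lt {v : ℕ} {β : List ℕ} (hβ : ∀ x ∈ β, v < x) :
    desL (v :: β) = desL β := by
  cases β with
  | nil => rfl
  | cons b β => rw [desL, if_neg (Nat.not_lt.2 (hβ b mem_cons_self).le), zero_add]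

theorem desL_append_of_pairwise {c t : List ℕ} (ht : t.Pairwise (· < ·))
    (h : ∀ x ∈ c, ∀ y ∈ t, x < y) : desL (c ++ t) = desL c := by
  rcases eq_nil_or_concat' c with rfl | ⟨c, a, rfl⟩
  · exact desL_eq_zero_of_pairwise ht
  cases t with
  | nil => rw [append_nil]
  | cons b t =>
    have hab : a < b := h a (by simp) b mem_cons_self
    rw [append_assoc, singleton_append, desL_append_cons_cons, desL_eq_zero_of_pairwise ht,
      if_neg (Nat.not_lt.2 hab.le), add_zero, add_zero]

theorem desL_append_cons_of_min {α β : List ℕ} {v : ℕ} (hα : ∀ x ∈ α, v < x)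
    (hβ : ∀ x ∈ β, v < x) :
    desL (α ++ v :: β) = desL α + desL β + if α = [] then 0 else 1 := by
  rcases eq_nil_or_concat' α with rfl | ⟨α, a, rfl⟩
  · simp [desL_cons_of_forall_lt hβ, desL]
  rw [append_assoc, singleton_append, desL_append_cons_cons, desL_cons_of_forall_lt hβ,
    if_pos (hα a (by simp)), if_neg (by simp)]

theorem desL_append_cons_of_max {γ δ : List ℕ} {M : ℕ} (hγ : ∀ x ∈ γ, x < M)
    (hδ : ∀ x ∈ δ, x < M) :
    desL (γ ++ M :: δ) = desL γ + desL δ + if δ = [] then 0 else 1 := by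
  have hγM : desL (γ ++ [M]) = desL γ :=
    desL_append_of_pairwise (pairwise_singleton _ M) (by simpa using hγ)
  cases δ with
  | nil => simpa [desL] using hγM
  | cons d δ =>
    rw [desL_append_cons_cons, hγM, if_pos (hδ d mem_cons_self), if_neg (cons_ne_nil d δ)]

theorem splitLeftAux_succ_of_ne_nil (fuel : ℕ) {l : List ℕ} (hl : l ≠ []) :
    splitLeftAux (fuel + 1) l = l.take (l.idxOf (maxL l) + 1) ::
      splitLeftAux fuel (l.drop (l.idxOf (maxL l) + 1)) := by
  obtain ⟨a, t, rfl⟩ := exists_cons_of_ne_nil hl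
  rfl

theorem splitLeftAux_succ_eq {fuel : ℕ} {l : List ℕ} (h : l.length ≤ fuel) :
    splitLeftAux (fuel + 1) l = splitLeftAux fuel l := by
  induction fuel generalizing l with
  | zero => rw [length_eq_zero_iff.1 (Nat.le_zero.1 h)]; rfl
  | succ fuel ih =>
    rcases eq_or_ne l [] with rfl | hl
    · rfl
    rw [splitLeftAux_succ_of_ne_nil _ hl, splitLeftAux_succ_of_ne_nil _ hl, ih]
    rw [length_drop]; omega

theorem splitLeftAux_eq_splitLeft {fuel : ℕ} {l : List ℕ} (h : l.length ≤ fuel) :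
    splitLeftAux fuel l = splitLeft l := by
  induction fuel, h using Nat.le_induction with
  | base => rfl
  | succ fuel h ih => rw [splitLeftAux_succ_eq h, ih]

theorem splitLeftAux_sublist {p : List ℕ} :
    ∀ {fuel : ℕ} {l : List ℕ}, p ∈ splitLeftAux fuel l → p <+ l
  | 0, _, hp => by simp [splitLeftAux] at hp
  | _ + 1, [], hp => by simp [splitLeftAux] at hp
  | fuel + 1, a :: t, hp => by
    rw [splitLeftAux_succ_of_ne_nil fuel (cons_ne_nil a t), mem_cons] at hp
    rcases hp with rfl | hp
    · exact take_sublist _ _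
    · exact (splitLeftAux_sublist hp).trans (drop_sublist _ _)

theorem sublist_of_mem_splitLeft {l p : List ℕ} (hp : p ∈ splitLeft l) : p <+ l :=
  splitLeftAux_sublist hp

theorem splitLeft_append_cons {γ δ : List ℕ} {M : ℕ} (h : ∀ x ∈ γ ++ δ, x < M) :
    splitLeft (γ ++ M :: δ) = (γ ++ [M]) :: splitLeft δ := by
  have hM : M ∉ γ := fun hM => lt_irrefl M (h M (mem_append_left δ hM))
  have hmax : maxL (γ ++ M :: δ) = M := maxL_eq (by simp) <| by
    simp only [mem_append, mem_cons]
    rintro x (hx | rfl | hx)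
    exacts [(h x (mem_append_left δ hx)).le, le_rfl, (h x (mem_append_right γ hx)).le]
  have hidx : (γ ++ M :: δ).idxOf M = γ.length := by
    rw [idxOf_append_of_notMem hM, idxOf_cons_self, add_zero]
  rw [splitLeft, length_append, length_cons, ← add_assoc,
    splitLeftAux_succ_of_ne_nil _ (by simp), hmax, hidx,
    splitLeftAux_eq_splitLeft (by simp)]
  simp [take_append]

section OrderPreserving

variable {φ : ℕ → ℕ} {l : List ℕ}

theorem minL_map (hφ : StrictMonoOn φ {x | x ∈ l}) (hl : l ≠ []) :
    minL (l.map φ) = φ (minL l) :=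
  minL_eq (mem_map_of_mem (minL_mem hl)) <| by
    simp only [mem_map, forall_exists_index, and_imp, forall_apply_eq_imp_iff₂]
    exact fun x hx => hφ.monotoneOn (minL_mem hl) hx (minL_le hx)

theorem maxL_map (hφ : StrictMonoOn φ {x | x ∈ l}) (hl : l ≠ []) :
    maxL (l.map φ) = φ (maxL l) :=
  maxL_eq (mem_map_of_mem (maxL_mem hl)) <| by
    simp only [mem_map, forall_exists_index, and_imp, forall_apply_eq_imp_iff₂]
    exact fun x hx => hφ.monotoneOn hx (maxL_mem hl) (le_maxL hx)

theorem idxOf_map_of_injOn {x : ℕ} (hφ : Set.InjOn φ {x | x ∈ l}) (hx : x ∈ l) :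
    (l.map φ).idxOf (φ x) = l.idxOf x := by
  induction l with
  | nil => simp at hx
  | cons a t ih =>
    by_cases hax : a = x
    · subst hax; simp
    · have hφx : φ a ≠ φ x := fun h => hax (hφ mem_cons_self hx h)
      rw [map_cons, idxOf_cons_ne _ hφx, idxOf_cons_ne _ hax,
        ih (hφ.mono fun _ hy => mem_cons_of_mem a hy) ((mem_cons.1 hx).resolve_left (Ne.symm hax))]

theorem pairwise_lt_map_iff (hφ : StrictMonoOn φ {x | x ∈ l}) :
    (l.map φ).Pairwise (· < ·) ↔ l.Pairwise (· < ·) := by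
  rw [pairwise_map]
  exact Pairwise.iff_of_mem fun ha hb => hφ.lt_iff_lt ha hb

theorem desL_map : ∀ {l : List ℕ}, StrictMonoOn φ {x | x ∈ l} →
    desL (l.map φ) = desL l
  | [], _ | [_], _ => rfl
  | a :: b :: t, hφ => by
    rw [map_cons, map_cons, desL, desL, ← map_cons, desL_map (hφ.mono fun _ => mem_cons_of_mem a)]
    simp only [hφ.lt_iff_lt (mem_cons_of_mem a mem_cons_self : b ∈ a :: b :: t)
      (mem_cons_self : a ∈ a :: b :: t)]

theorem splitLeft_map (hφ : StrictMonoOn φ {x | x ∈ l}) :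
    splitLeft (l.map φ) = (splitLeft l).map (map φ) := by
  rw [splitLeft, splitLeft, length_map]
  generalize l.length = fuel
  induction fuel generalizing l with
  | zero => rfl
  | succ fuel ih =>
    rcases eq_or_ne l [] with rfl | hl
    · rfl
    rw [splitLeftAux_succ_of_ne_nil _ hl, splitLeftAux_succ_of_ne_nil _ (by simpa using hl),
      maxL_map hφ hl, idxOf_map_of_injOn hφ.injOn (maxL_mem hl), ← map_take, ← map_drop,
      ih (hφ.mono fun _ hx => mem_of_mem_drop hx), map_cons]

end OrderPreserving

end Sequences

section Weight

open List

theorem splitAll_eq (l : List ℕ) :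
    splitAll l = splitLeft (l.take (l.idxOf (minL l))) ++ [[minL l]] ++
      [l.drop (l.idxOf (minL l) + 1)] := rfl

theorem subset_of_mem_splitAll {l p : List ℕ} (hl : l ≠ []) (hp : p ∈ splitAll l) : p ⊆ l := by
  simp only [splitAll_eq, mem_append, mem_singleton] at hp
  rcases hp with (hp | rfl) | rfl
  · exact ((sublist_of_mem_splitLeft hp).trans (take_sublist _ _)).subset
  · simpa using minL_mem hl
  · exact (drop_sublist _ _).subset

theorem length_lt_of_mem_splitAll {l p : List ℕ} (hl : 2 ≤ l.length) (hp : p ∈ splitAll l) :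
    p.length < l.length := by
  have hidx : l.idxOf (minL l) < l.length :=
    idxOf_lt_length_iff.2 (minL_mem (ne_nil_of_length_pos (by omega)))
  simp only [splitAll_eq, mem_append, mem_singleton] at hp
  rcases hp with (hp | rfl) | rfl
  · have := (sublist_of_mem_splitLeft hp).length_le
    rw [length_take] at this
    omega
  · simp; omega
  · rw [length_drop]; omega

/-- The weight `w` without fuel and without appending a new maximum before splitting;
`weightAux_append_eq_weight` shows that this computes the same value. -/
def weight (l : List ℕ) : ℕ :=
  if l.length ≤ 1 ∨ l.Pairwise (· < ·) then 0
  else ((splitAll l).attach.map fun p => desL p.1 + weight p.1).sum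
termination_by l.length
decreasing_by exact length_lt_of_mem_splitAll (by omega) p.2

theorem weight_eq_zero {l : List ℕ} (h : l.length ≤ 1 ∨ l.Pairwise (· < ·)) : weight l = 0 := by
  rw [weight, if_pos h]

theorem weight_eq_sum {l : List ℕ} (h : ¬(l.length ≤ 1 ∨ l.Pairwise (· < ·))) :
    weight l = ((splitAll l).map fun p => desL p + weight p).sum := by
  rw [weight, if_neg h]
  simp

theorem splitAll_append {c t : List ℕ} (hc : c ≠ []) (h : ∀ x ∈ c, ∀ y ∈ t, x < y) :
    splitAll (c ++ t) = splitLeft (c.take (c.idxOf (minL c))) ++ [[minL c]] ++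
      [c.drop (c.idxOf (minL c) + 1) ++ t] := by
  have hmin : minL (c ++ t) = minL c := minL_eq (mem_append_left t (minL_mem hc)) <| by
    simp only [mem_append]
    rintro x (hx | hx)
    exacts [minL_le hx, (h _ (minL_mem hc) x hx).le]
  have hidx : (c ++ t).idxOf (minL c) = c.idxOf (minL c) := idxOf_append_of_mem (minL_mem hc)
  have hlt : c.idxOf (minL c) < c.length := idxOf_lt_length_iff.2 (minL_mem hc)
  rw [splitAll_eq, hmin, hidx, take_append_of_le_length hlt.le,
    drop_append_of_le_length (by omega)]

theorem weightAux_append_eq_weight {fuel : ℕ} {c t : List ℕ} (hfuel : c.length < fuel)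
    (ht : t.Pairwise (· < ·)) (h : ∀ x ∈ c, ∀ y ∈ t, x < y) :
    weightAux fuel (c ++ t) = weight c := by
  induction fuel generalizing c t with
  | zero => omega
  | succ fuel ih =>
    by_cases htriv : c.length ≤ 1 ∨ c.Pairwise (· < ·)
    · have hc : c.Pairwise (· < ·) := htriv.elim pairwise_of_length_le_one id
      rw [weight_eq_zero htriv, weightAux, if_pos (Or.inr (pairwise_append.2 ⟨hc, ht, h⟩))]
    have hc : c ≠ [] := by rintro rfl; simp at htriv
    have htriv' : ¬((c ++ t).length ≤ 1 ∨ (c ++ t).Pairwise (· < ·)) := by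
      rintro (h' | h')
      · exact htriv (Or.inl (by rw [length_append] at h'; omega))
      · exact htriv (Or.inr (h'.sublist (sublist_append_left c t)))
    -- the entry `M + 1` appended by `weightAux` just prolongs the increasing tail `t`
    set M := (c ++ t).foldr Nat.max 0
    have hM : ∀ x ∈ c ++ t, x < M + 1 := fun x hx => Nat.lt_succ_of_le (le_maxL hx)
    have ht' : (t ++ [M + 1]).Pairwise (· < ·) := pairwise_append.2
      ⟨ht, pairwise_singleton _ _, by simpa using fun y hy => hM y (mem_append_right c hy)⟩
    have h' : ∀ x ∈ c, ∀ y ∈ t ++ [M + 1], x < y := fun x hx y hy =>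
      (mem_append.1 hy).elim (h x hx y) fun hy => mem_singleton.1 hy ▸ hM x (mem_append_left t hx)
    have hpieces : ∀ p ∈ splitAll c, weightAux fuel p = weight p := fun p hp => by
      simpa using ih (t := []) (by have := length_lt_of_mem_splitAll (by omega) hp; omega)
        .nil (by simp)
    have hd : ∀ x ∈ c.drop (c.idxOf (minL c) + 1), ∀ y ∈ t ++ [M + 1], x < y :=
      fun x hx => h' x (mem_of_mem_drop hx)
    have hL : ∀ p ∈ splitLeft (c.take (c.idxOf (minL c))) ++ [[minL c]], p ∈ splitAll c :=
      fun p hp => by rw [splitAll_eq]; exact mem_append_left _ hp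
    rw [weightAux, if_neg htriv', append_assoc, splitAll_append hc h', weight_eq_sum htriv,
      splitAll_eq]
    generalize splitLeft (c.take (c.idxOf (minL c))) ++ [[minL c]] = L at hL ⊢
    rw [map_append, map_append, sum_append, sum_append]
    congr 1
    · exact congrArg List.sum (map_congr_left fun p hp => by rw [hpieces p (hL p hp)])
    · simp only [map_cons, map_nil, sum_cons, sum_nil, add_zero]
      rw [desL_append_of_pairwise ht' hd, ih (by rw [length_drop]; omega) ht' hd]

theorem weightL_eq_weight (l : List ℕ) : weightL l = weight l := by
  have hfuel : l.length < (l.length + 2) ^ 2 := by nlinarith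
  simpa [weightL] using weightAux_append_eq_weight hfuel (t := []) .nil (by simp)

theorem weight_append_of_pairwise {c t : List ℕ} (ht : t.Pairwise (· < ·))
    (h : ∀ x ∈ c, ∀ y ∈ t, x < y) : weight (c ++ t) = weight c := by
  have hc := weightAux_append_eq_weight (fuel := (c ++ t).length + 1) (by simp) ht h
  have hct := weightAux_append_eq_weight (fuel := (c ++ t).length + 1) (t := [])
    (Nat.lt_succ_self _) .nil (by simp)
  rwa [append_nil, hc, eq_comm] at hct

def splitWeight (l : List ℕ) : ℕ := ((splitLeft l).map fun p => desL p + weight p).sum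

theorem splitAll_append_cons_of_min {α β : List ℕ} {v : ℕ} (hα : ∀ x ∈ α, v < x)
    (hβ : ∀ x ∈ β, v < x) : splitAll (α ++ v :: β) = splitLeft α ++ [[v]] ++ [β] := by
  have hmin : minL (α ++ v :: β) = v := minL_eq (by simp) <| by
    simp only [mem_append, mem_cons]
    rintro x (hx | rfl | hx)
    exacts [(hα x hx).le, le_rfl, (hβ x hx).le]
  have hidx : (α ++ v :: β).idxOf v = α.length := by
    rw [idxOf_append_of_notMem fun hv => lt_irrefl v (hα v hv), idxOf_cons_self, add_zero]
  simp [splitAll_eq, hmin, hidx, drop_append]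

theorem weight_append_cons_of_min {α β : List ℕ} {v : ℕ} (hα : ∀ x ∈ α, v < x)
    (hβ : ∀ x ∈ β, v < x) : weight (α ++ v :: β) = splitWeight α + desL β + weight β := by
  by_cases htriv : (α ++ v :: β).length ≤ 1 ∨ (α ++ v :: β).Pairwise (· < ·)
  · obtain rfl : α = [] := by
      cases α with
      | nil => rfl
      | cons a α =>
        have hva := hα a mem_cons_self
        simp only [length_append, length_cons, cons_append, pairwise_cons, mem_append,
          mem_cons] at htriv
        rcases htriv with h | ⟨h, -⟩
        · omega
        · exact absurd (h v (Or.inr (Or.inl rfl))) (Nat.not_lt.2 hva.le)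
    have hβs : β.Pairwise (· < ·) := htriv.elim
      (fun h => pairwise_of_length_le_one (by simp only [nil_append, length_cons] at h; omega))
      (·.of_cons)
    rw [weight_eq_zero htriv, weight_eq_zero (Or.inr hβs), desL_eq_zero_of_pairwise hβs]
    rfl
  · rw [weight_eq_sum htriv, splitAll_append_cons_of_min hα hβ, map_append, map_append,
      sum_append, sum_append]
    simp only [splitWeight, map_cons, map_nil, sum_cons, sum_nil, desL,
      weight_eq_zero (l := [v]) (Or.inl le_rfl)]
    ring

theorem splitWeight_append_cons_of_max {γ δ : List ℕ} {M : ℕ} (hγ : ∀ x ∈ γ, x < M)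
    (hδ : ∀ x ∈ δ, x < M) : splitWeight (γ ++ M :: δ) = desL γ + weight γ + splitWeight δ := by
  have hγM : ∀ x ∈ γ, ∀ y ∈ [M], x < y := by simpa using hγ
  rw [splitWeight, splitLeft_append_cons (by simpa [or_imp, forall_and] using ⟨hγ, hδ⟩),
    map_cons, sum_cons, desL_append_of_pairwise (pairwise_singleton _ M) hγM,
    weight_append_of_pairwise (pairwise_singleton _ M) hγM, splitWeight]

variable {φ : ℕ → ℕ}

theorem splitAll_map {l : List ℕ} (hφ : StrictMonoOn φ {x | x ∈ l}) (hl : l ≠ []) :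
    splitAll (l.map φ) = (splitAll l).map (map φ) := by
  rw [splitAll_eq, splitAll_eq, minL_map hφ hl, idxOf_map_of_injOn hφ.injOn (minL_mem hl),
    ← map_take, ← map_drop, splitLeft_map (hφ.mono fun _ hx => mem_of_mem_take hx)]
  simp

theorem weight_map {l : List ℕ} (hφ : StrictMonoOn φ {x | x ∈ l}) :
    weight (l.map φ) = weight l := by
  induction l using weight.induct with
  | case1 l htriv =>
    rw [weight_eq_zero htriv, weight_eq_zero]
    rwa [length_map, pairwise_lt_map_iff hφ]
  | case2 l htriv ih =>
    have hl : l ≠ [] := by rintro rfl; simp at htriv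
    rw [weight_eq_sum htriv, weight_eq_sum (by rwa [length_map, pairwise_lt_map_iff hφ]),
      splitAll_map hφ hl, map_map]
    refine congrArg List.sum (map_congr_left fun p hp => ?_)
    have hφp : StrictMonoOn φ {x | x ∈ p} := hφ.mono fun x hx => subset_of_mem_splitAll hl hp hx
    simp only [Function.comp_apply, desL_map hφp, ih ⟨p, hp⟩ hφp]

theorem splitWeight_map {l : List ℕ} (hφ : StrictMonoOn φ {x | x ∈ l}) :
    splitWeight (l.map φ) = splitWeight l := by
  rw [splitWeight, splitWeight, splitLeft_map hφ, map_map]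
  refine congrArg List.sum (map_congr_left fun p hp => ?_)
  have hφp : StrictMonoOn φ {x | x ∈ p} :=
    hφ.mono fun x hx => (sublist_of_mem_splitLeft hp).subset hx
  simp only [Function.comp_apply, desL_map hφp, weight_map hφp]

end Weight

section Arrangements

open Finset

def arrangements (s : Finset ℕ) : Finset (List ℕ) := (s.sort (· ≤ ·)).permutations.toFinset

theorem mem_arrangements {s : Finset ℕ} {l : List ℕ} :
    l ∈ arrangements s ↔ l.Nodup ∧ l.toFinset = s := by
  rw [arrangements, List.mem_toFinset, List.mem_permutations]
  refine ⟨fun h => ⟨h.nodup_iff.2 (sort_nodup s _), ?_⟩, fun ⟨hl, hs⟩ => ?_⟩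
  · rw [List.toFinset_eq_of_perm _ _ h, sort_toFinset]
  · exact List.perm_of_nodup_nodup_toFinset_eq hl (sort_nodup s _) (by rw [hs, sort_toFinset])

theorem card_arrangements (s : Finset ℕ) : #(arrangements s) = (#s).factorial := by
  rw [arrangements, List.toFinset_card_of_nodup (List.nodup_permutations _ (sort_nodup s _)),
    List.length_permutations, length_sort]

def IsOrderInvariant {R : Type*} (g : List ℕ → R) : Prop :=
  ∀ ⦃φ : ℕ → ℕ⦄ ⦃l : List ℕ⦄, StrictMonoOn φ {x | x ∈ l} → g (l.map φ) = g l

def permSum {R : Type*} [AddCommMonoid R] (g : List ℕ → R) (n : ℕ) : R :=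
  ∑ σ : Equiv.Perm (Fin n), g (permWord σ)

theorem mem_Icc_of_mem_permWord {n x : ℕ} {σ : Equiv.Perm (Fin n)} (hx : x ∈ permWord σ) :
    x ∈ Icc 1 n := by
  obtain ⟨i, rfl⟩ := List.mem_ofFn.1 hx
  have := (σ i).isLt
  rw [mem_Icc]
  omega

theorem sum_arrangements_eq_permSum {R : Type*} [AddCommMonoid R] {g : List ℕ → R}
    (hg : IsOrderInvariant g) {A : Finset ℕ} {n : ℕ} (hA : #A = n) :
    ∑ l ∈ arrangements A, g l = permSum g n := by
  set e := A.orderEmbOfFin hA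
  let word : Equiv.Perm (Fin n) → List ℕ := fun σ => List.ofFn (e ∘ σ)
  have hword : Function.Injective word := fun σ τ h =>
    Equiv.ext fun i => e.injective (congrFun (List.ofFn_injective h) i)
  have himage : univ.image word = arrangements A := by
    refine eq_of_subset_of_card_le (fun l hl => ?_) ?_
    · obtain ⟨σ, -, rfl⟩ := mem_image.1 hl
      refine mem_arrangements.2 ⟨List.nodup_ofFn.2 (e.injective.comp σ.injective), ?_⟩
      ext x
      simp only [word, List.mem_toFinset, List.mem_ofFn, Function.comp_apply]
      refine ⟨fun ⟨i, hi⟩ => hi ▸ orderEmbOfFin_mem A hA (σ i), fun hx => ?_⟩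
      obtain ⟨j, rfl⟩ : x ∈ Set.range e := by rwa [range_orderEmbOfFin]
      exact ⟨σ.symm j, by simp⟩
    · rw [card_arrangements, card_image_of_injective _ hword, card_univ, Fintype.card_perm,
        Fintype.card_fin, hA]
  -- `φ` relabels `j ∈ [n]` by the `j`-th smallest element of `A`
  let φ : ℕ → ℕ := fun j => if h : j - 1 < n then e ⟨j - 1, h⟩ else 0
  have hφ (σ : Equiv.Perm (Fin n)) : StrictMonoOn φ {x | x ∈ permWord σ} := by
    intro a ha b hb hab
    have ha := mem_Icc.1 (mem_Icc_of_mem_permWord ha)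
    have hb := mem_Icc.1 (mem_Icc_of_mem_permWord hb)
    simp only [φ, dif_pos (show a - 1 < n by omega), dif_pos (show b - 1 < n by omega)]
    exact e.strictMono (Fin.mk_lt_mk.2 (by omega))
  have hmap (σ : Equiv.Perm (Fin n)) : word σ = (permWord σ).map φ := by
    simp only [word, permWord, List.map_ofFn]
    congr 1
    funext i
    simp [φ, (σ i).isLt]
  rw [← himage, sum_image fun σ _ τ _ h => hword h, permSum]
  exact sum_congr rfl fun σ _ => by rw [hmap, hg (hφ σ)]

theorem sum_arrangements_split {M : Type*} [AddCommMonoid M] (G : List ℕ → M) {s : Finset ℕ}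
    {v : ℕ} (hv : v ∈ s) :
    ∑ l ∈ arrangements s, G l = ∑ A ∈ (s.erase v).powerset, ∑ l₁ ∈ arrangements A,
      ∑ l₂ ∈ arrangements (s.erase v \ A), G (l₁ ++ v :: l₂) := by
  rw [← sum_congr rfl fun A _ => sum_product (arrangements A) (arrangements (s.erase v \ A))
    fun p => G (p.1 ++ v :: p.2), sum_sigma']
  symm
  refine sum_bij (fun x _ => x.2.1 ++ v :: x.2.2) ?_ ?_ ?_ fun _ _ => rfl
  · rintro ⟨A, l₁, l₂⟩ hx
    simp only [Finset.mem_sigma, Finset.mem_product, mem_powerset, mem_arrangements] at hx ⊢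
    obtain ⟨hA, ⟨hl₁, rfl⟩, hl₂, hs⟩ := hx
    simp only [Finset.ext_iff, subset_iff, List.mem_toFinset, mem_erase, mem_sdiff] at hA hs
    refine ⟨List.nodup_append.2 ⟨hl₁, List.nodup_cons.2 ⟨fun h => ?_, hl₂⟩, ?_⟩, ?_⟩
    · grind
    · grind
    · ext x
      simp only [List.mem_toFinset, List.mem_append, List.mem_cons]
      grind
  · rintro ⟨A, l₁, l₂⟩ hx ⟨A', l₁', l₂'⟩ hx' h
    simp only [Finset.mem_sigma, Finset.mem_product, mem_powerset, mem_arrangements] at hx hx'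
    obtain ⟨hA, ⟨-, rfl⟩, -, hs⟩ := hx
    obtain ⟨-, ⟨-, rfl⟩, -⟩ := hx'
    have hv₁ : v ∉ l₁ := fun h => by simpa using hA (List.mem_toFinset.2 h)
    have hv₂ : v ∉ l₂ := fun h => by simpa [hs] using List.mem_toFinset.2 h
    obtain ⟨rfl, -, rfl⟩ := (List.append_cons_inj_of_notMem hv₁ hv₂).1 h
    rfl
  · intro l hl
    obtain ⟨l₁, l₂, rfl⟩ := List.append_of_mem
      (List.mem_toFinset.1 ((mem_arrangements.1 hl).2 ▸ hv))
    refine ⟨⟨l₁.toFinset, l₁, l₂⟩, ?_, rfl⟩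
    obtain ⟨hnd, hs⟩ := mem_arrangements.1 hl
    simp only [Finset.ext_iff, List.mem_toFinset, List.mem_append, List.mem_cons] at hs
    simp only [List.nodup_append, List.nodup_cons] at hnd
    simp only [Finset.mem_sigma, Finset.mem_product, mem_powerset, mem_arrangements,
      Finset.ext_iff, subset_iff, List.mem_toFinset, mem_erase, mem_sdiff]
    grind

theorem sum_arrangements_eq_sum_choose {R : Type*} [Semiring R] {G g h : List ℕ → R}
    (hg : IsOrderInvariant g) (hh : IsOrderInvariant h) {s : Finset ℕ} {v : ℕ} (hv : v ∈ s)
    (hsplit : ∀ l₁ l₂, (∀ x ∈ l₁, x ∈ s.erase v) → (∀ x ∈ l₂, x ∈ s.erase v) →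
      G (l₁ ++ v :: l₂) = g l₁ * h l₂) :
    ∑ l ∈ arrangements s, G l = ∑ i ∈ range #s,
      ((#s - 1).choose i : R) * permSum g i * permSum h (#s - 1 - i) := by
  have hcard : #(s.erase v) = #s - 1 := card_erase_of_mem hv
  have hblock : ∀ A ∈ (s.erase v).powerset,
      ∑ l₁ ∈ arrangements A, ∑ l₂ ∈ arrangements (s.erase v \ A), G (l₁ ++ v :: l₂) =
        permSum g #A * permSum h (#s - 1 - #A) := by
    intro A hA
    have hA := mem_powerset.1 hA
    rw [← sum_arrangements_eq_permSum hg rfl,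
      ← sum_arrangements_eq_permSum hh (by rw [card_sdiff_of_subset hA, hcard]), sum_mul_sum]
    refine sum_congr rfl fun l₁ hl₁ => sum_congr rfl fun l₂ hl₂ => hsplit l₁ l₂
      (fun x hx => hA ((mem_arrangements.1 hl₁).2 ▸ List.mem_toFinset.2 hx))
      (fun x hx => (mem_sdiff.1 ((mem_arrangements.1 hl₂).2 ▸ List.mem_toFinset.2 hx)).1)
  rw [sum_arrangements_split G hv, sum_congr rfl hblock,
    sum_powerset_apply_card (fun k => permSum g k * permSum h (#s - 1 - k)), hcard,
    Nat.sub_add_cancel (card_pos.2 ⟨v, hv⟩)]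
  simp only [nsmul_eq_mul, mul_assoc]

theorem permSum_zero {R : Type*} [AddCommMonoid R] (g : List ℕ → R) : permSum g 0 = g [] := by
  simp [permSum, permWord]

theorem permSum_mul_ite_nil {R : Type*} [Semiring R] (g : List ℕ → R) (a b : R) (n : ℕ) :
    permSum (fun l => g l * if l = [] then a else b) n = permSum g n * if n = 0 then a else b := by
  simp only [permSum, sum_mul, ← List.length_eq_zero_iff, permWord, List.length_ofFn]

theorem permSum_eq_sum_choose {R : Type*} [Semiring R] {G g h : List ℕ → R}
    (hG : IsOrderInvariant G) (hg : IsOrderInvariant g) (hh : IsOrderInvariant h) {n v : ℕ}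
    (hv : v ∈ Icc 1 n)
    (hsplit : ∀ l₁ l₂, (∀ x ∈ l₁, x ∈ (Icc 1 n).erase v) → (∀ x ∈ l₂, x ∈ (Icc 1 n).erase v) →
      G (l₁ ++ v :: l₂) = g l₁ * h l₂) :
    permSum G n = ∑ i ∈ range n, ((n - 1).choose i : R) * permSum g i * permSum h (n - 1 - i) := by
  have hcard : #(Icc 1 n) = n := by simp
  rw [← sum_arrangements_eq_permSum hG hcard, sum_arrangements_eq_sum_choose hg hh hv hsplit, hcard]

end Arrangements

section Polynomials

open Finset MvPolynomial

noncomputable def Fpoly (n : ℕ) : MvPolynomial (Fin 2) ℤ :=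
  permSum (fun l => X 0 ^ desL l * X 1 ^ splitWeight l) n

theorem Epoly_eq_permSum (n : ℕ) :
    Epoly n = permSum (fun l => X 0 ^ desL l * X 1 ^ weight l) n := by
  simp only [Epoly, permSum, weightL_eq_weight]

theorem EpolyQx_eq_permSum (n : ℕ) :
    EpolyQx n = permSum (fun l => (X 1 * X 0) ^ desL l * X 1 ^ weight l) n := by
  simp only [EpolyQx, permSum, weightL_eq_weight]

theorem Epoly_eq_sum {n : ℕ} (hn : 1 ≤ n) :
    Epoly n = ∑ i ∈ range n, ((n - 1).choose i : MvPolynomial (Fin 2) ℤ) *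
      (Fpoly i * if i = 0 then 1 else X 0) * EpolyQx (n - 1 - i) := by
  simp only [Epoly_eq_permSum, EpolyQx_eq_permSum, Fpoly, ← permSum_mul_ite_nil]
  refine permSum_eq_sum_choose (fun φ l hφ => by simp only [desL_map hφ, weight_map hφ])
    (fun φ l hφ => by simp only [desL_map hφ, splitWeight_map hφ, List.map_eq_nil_iff])
    (fun φ l hφ => by simp only [desL_map hφ, weight_map hφ]) (mem_Icc.2 ⟨le_rfl, hn⟩)
    fun l₁ l₂ h₁ h₂ => ?_
  have hlt : ∀ x ∈ (Icc 1 n).erase 1, 1 < x := fun x hx => by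
    rw [mem_erase, mem_Icc] at hx; omega
  rw [desL_append_cons_of_min (fun x hx => hlt x (h₁ x hx)) (fun x hx => hlt x (h₂ x hx)),
    weight_append_cons_of_min (fun x hx => hlt x (h₁ x hx)) (fun x hx => hlt x (h₂ x hx))]
  split_ifs <;> ring

theorem Fpoly_eq_sum {n : ℕ} (hn : 1 ≤ n) :
    Fpoly n = ∑ i ∈ range n, ((n - 1).choose i : MvPolynomial (Fin 2) ℤ) *
      EpolyQx i * (Fpoly (n - 1 - i) * if n - 1 - i = 0 then 1 else X 0) := by
  simp only [EpolyQx_eq_permSum, Fpoly, ← permSum_mul_ite_nil]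
  refine permSum_eq_sum_choose (fun φ l hφ => by simp only [desL_map hφ, splitWeight_map hφ])
    (fun φ l hφ => by simp only [desL_map hφ, weight_map hφ])
    (fun φ l hφ => by simp only [desL_map hφ, splitWeight_map hφ, List.map_eq_nil_iff])
    (mem_Icc.2 ⟨hn, le_rfl⟩) fun l₁ l₂ h₁ h₂ => ?_
  have hlt : ∀ x ∈ (Icc 1 n).erase n, x < n := fun x hx => by
    rw [mem_erase, mem_Icc] at hx; omega
  rw [desL_append_cons_of_max (fun x hx => hlt x (h₁ x hx)) (fun x hx => hlt x (h₂ x hx)),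
    splitWeight_append_cons_of_max (fun x hx => hlt x (h₁ x hx)) (fun x hx => hlt x (h₂ x hx))]
  split_ifs <;> ring

theorem Fpoly_eq_Epoly (n : ℕ) : Fpoly n = Epoly n := by
  rcases Nat.eq_zero_or_pos n with rfl | hn
  · simp [Fpoly, Epoly_eq_permSum, permSum_zero, desL, splitWeight, weight_eq_zero,
      show splitLeft [] = [] from rfl]
  rw [Fpoly_eq_sum hn, Epoly_eq_sum hn, ← sum_range_reflect]
  refine sum_congr rfl fun i hi => ?_
  have hi : i < n := Finset.mem_range.1 hi
  rw [Nat.sub_sub_self (by omega : i ≤ n - 1), Nat.choose_symm (by omega : i ≤ n - 1)]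
  ring

end Polynomials

open MvPolynomial in
/-- The recurrence for the q-Eulerian polynomials `E_n(x,q)`. -/
theorem Epoly_recurrence :
    Epoly 0 = 1 ∧ ∀ n : ℕ, 1 ≤ n →
      Epoly n = (∑ i ∈ Finset.Icc 1 (n - 1),
          (Nat.choose (n - 1) i : MvPolynomial (Fin 2) ℤ) * Epoly i *
            EpolyQx (n - i - 1) * X 0) + EpolyQx (n - 1) := by
  have hE0 : Epoly 0 = 1 := by simp [Epoly_eq_permSum, permSum_zero, desL, weight_eq_zero]
  refine ⟨hE0, fun n hn => ?_⟩
  obtain ⟨m, rfl⟩ : ∃ m, n = m + 1 := ⟨n - 1, by omega⟩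
  rw [Epoly_eq_sum hn, Finset.sum_range_succ', ← Finset.Ico_add_one_right_eq_Icc,
    Finset.sum_Ico_eq_sum_range]
  simp only [Nat.add_sub_cancel]
  congr 1
  · refine Finset.sum_congr rfl fun k _ => ?_
    rw [if_neg k.succ_ne_zero, Fpoly_eq_Epoly, add_comm 1 k,
      show m - (k + 1) = m + 1 - (k + 1) - 1 by omega]
    ring
  · simp [Fpoly_eq_Epoly, hE0]
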